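/- Let Σ = Fin 2 and n = 2m+1 odd, and let the group G = S_2 × ⟨r⟩ (of order 4, isomorphic to the Klein four-group) act on local rules f : (Fin n → Σ) → Σ by (α, ρ) · f = (w ↦ α (f (α⁻¹ ∘ ρ(w)))) where ρ is either the identity or word-reversal. Then the total number of G-orbits on the set of local rules equals (2·2^(2^(2m)) + 2^(2^m (2^m+1)) + 2^(2^(2m+1))) / 4. -/

import Mathlib

/-!
Burnside's lemma reduces the count to the fixed-point sets of the four symmetries. A rule is
fixed by `g = (α, ρ)` exactly when it intertwines the involution `w ↦ α⁻¹ ∘ w ∘ ρ` of words with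
the involution `α⁻¹` of letters, and such intertwiners of two involutions are counted orbit by
orbit: a fixed word must go to a fixed letter, while on a two-element orbit the value at one point
is free and determines the other. For `α = (01)` there are no fixed letters, and also no fixed
words, because the middle letter of a word of odd length is fixed by `ρ`; for `g = r` the fixed
words are the `2^(m+1)` palindromes.
-/

/-- The Klein four-group of symmetries `S_2 × ⟨r⟩`. -/
abbrev KleinGrp := Equiv.Perm (Fin 2) × Multiplicative (ZMod 2)

/-- Action of a symmetry on a local rule: `(α, ρ) · f = w ↦ α (f (α⁻¹ ∘ ρ(w)))`,
where `ρ(w)` reverses the word iff the reflection component is nontrivial. -/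
def ract {n : ℕ} (g : KleinGrp) (f : (Fin n → Fin 2) → Fin 2) :
    (Fin n → Fin 2) → Fin 2 :=
  fun w => g.1 (f (fun i => g.1⁻¹ (w (if Multiplicative.toAdd g.2 = 0 then i else i.rev))))

open Function

namespace MulAction

variable (G X : Type*) [Group G] [MulAction G X]

theorem card_orbitSets :
    Nat.card {s : Set X // ∃ x, s = orbit G x} = Nat.card (orbitRel.Quotient G X) :=
  Nat.card_congr <| (Equiv.subtypeEquivRight fun s => by
    simp [eq_comm, Quotient.mk''_surjective.exists, orbitRel.Quotient.orbit_mk]).trans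
    (Equiv.ofInjective _ orbitRel.Quotient.orbit_injective).symm

theorem card_orbits_mul_card_eq_sum [Fintype G] [Finite X] :
    Nat.card (orbitRel.Quotient G X) * Nat.card G = ∑ g : G, Nat.card (fixedBy X g) := by
  have := Fintype.ofFinite X
  have : Fintype (orbitRel.Quotient G X) := Fintype.ofFinite _
  have : ∀ g : G, Fintype (fixedBy X g) := fun _ => Fintype.ofFinite _
  simp only [Nat.card_eq_fintype_card, sum_card_fixedBy_eq_card_orbits_mul_card_group]

end MulAction

section Involutive

variable {X Y : Type*} {T : X → X} {σ : Y → Y}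

open scoped Classical in
/-- On each two-element orbit `{x, T x}` the value at the larger point is free. -/
noncomputable def equivariantEquiv [LinearOrder X] (hT : Involutive T) (hσ : Involutive σ) :
    {f : X → Y // ∀ x, f (T x) = σ (f x)} ≃
      ({x // T x = x} → {y // σ y = y}) × ({x // T x < x} → Y) where
  toFun f := (fun x => ⟨f.1 x, by rw [← f.2, x.2]⟩, fun x => f.1 x)
  invFun p := ⟨fun x =>
      if hx : T x = x then p.1 ⟨x, hx⟩
      else if hlt : T x < x then p.2 ⟨x, hlt⟩
      else σ (p.2 ⟨T x, by rw [hT x]; exact lt_of_le_of_ne (not_lt.1 hlt) (Ne.symm hx)⟩), by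
    intro x
    by_cases hx : T x = x
    · simp [hx, (p.1 ⟨x, hx⟩).2]
    · by_cases hlt : T x < x
      · simp [hx, hlt, Ne.symm hx, hT x, not_lt_of_gt hlt]
      · have hgt : x < T x := lt_of_le_of_ne (not_lt.1 hlt) (Ne.symm hx)
        simp [hx, hlt, Ne.symm hx, hgt, hσ _, hT x]⟩
  left_inv f := by
    ext x
    by_cases hx : T x = x
    · simp [hx]
    · by_cases hlt : T x < x
      · simp [hx, hlt]
      · simp [hx, hlt, ← f.2, hT x]
  right_inv p := by
    refine Prod.ext (funext fun x => Subtype.ext ?_) (funext fun x => ?_)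
    · simp [x.2]
    · simp [x.2, x.2.ne]

lemma two_mul_card_lt_add_card_fixed [LinearOrder X] [Finite X] (hT : Involutive T) :
    2 * Nat.card {x // T x < x} + Nat.card {x // T x = x} = Nat.card X := by
  classical
  have hswap : Nat.card {x // T x < x} = Nat.card {x // x < T x} :=
    Nat.card_congr ((hT.toPerm T).subtypeEquiv fun x => by simp [hT x])
  have hmoved :
      Nat.card {x // T x ≠ x} = Nat.card {x // T x < x} + Nat.card {x // x < T x} := by
    rw [← Nat.card_sum]
    exact Nat.card_congr ((Equiv.subtypeEquivRight fun x => ne_iff_lt_or_gt).trans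
      (subtypeOrEquiv _ _ fun p hp hq x hx => (lt_asymm (hp x hx) (hq x hx)).elim))
  rw [← Nat.card_congr (Equiv.sumCompl fun x => T x = x), Nat.card_sum, hmoved, ← hswap]
  ring

theorem card_equivariant [Finite X] [Finite Y] (hT : Involutive T) (hσ : Involutive σ) :
    Nat.card {f : X → Y // ∀ x, f (T x) = σ (f x)} =
      Nat.card {y // σ y = y} ^ Nat.card {x // T x = x} *
        Nat.card Y ^ ((Nat.card X - Nat.card {x // T x = x}) / 2) := by
  let _ : LinearOrder X := WellOrderingRel.isWellOrder.linearOrder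
  rw [Nat.card_congr (equivariantEquiv hT hσ), Nat.card_prod, Nat.card_fun, Nat.card_fun,
    ← two_mul_card_lt_add_card_fixed hT, Nat.add_sub_cancel, Nat.mul_div_cancel_left _ two_pos]

lemma card_rev_eq_self (m : ℕ) : Nat.card {i : Fin (2 * m + 1) // i.rev = i} = 1 := by
  rw [Nat.card_eq_one_iff_unique]
  refine ⟨⟨fun i j => Subtype.ext (Fin.ext ?_)⟩, ⟨⟨⟨m, by omega⟩, Fin.ext ?_⟩⟩⟩
  · have hi := congrArg Fin.val i.2
    have hj := congrArg Fin.val j.2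
    simp only [Fin.val_rev] at hi hj
    omega
  · simp only [Fin.val_rev]
    omega

theorem card_palindromes (α : Type*) [Finite α] (m : ℕ) :
    Nat.card {w : Fin (2 * m + 1) → α // ∀ i, w i.rev = w i} = Nat.card α ^ (m + 1) := by
  refine (card_equivariant (T := Fin.rev) (σ := (id : α → α)) Fin.rev_rev fun _ => rfl).trans ?_
  rw [card_rev_eq_self, Nat.card_fin,
    Nat.card_congr (Equiv.subtypeUnivEquiv (p := fun y : α => id y = y) fun _ => rfl)]
  simp [pow_succ']

end Involutive

namespace KleinGrp

variable {n : ℕ}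

def reflect (a : Multiplicative (ZMod 2)) (i : Fin n) : Fin n :=
  if Multiplicative.toAdd a = 0 then i else i.rev

lemma reflect_mul (a b : Multiplicative (ZMod 2)) (i : Fin n) :
    reflect (a * b) i = reflect a (reflect b i) := by
  have h : ∀ c : Multiplicative (ZMod 2), c = 1 ∨ c = Multiplicative.ofAdd 1 := by decide
  rcases h a with rfl | rfl <;> rcases h b with rfl | rfl <;>
    simp [reflect, show (1 : ZMod 2) + 1 = 0 from rfl]

lemma reflect_reflect (a : Multiplicative (ZMod 2)) (i : Fin n) :
    reflect a (reflect a i) = i := by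
  rw [← reflect_mul, show a * a = 1 by revert a; decide]
  rfl

lemma reflect_middle (a : Multiplicative (ZMod 2)) (m : ℕ) :
    reflect a (⟨m, by omega⟩ : Fin (2 * m + 1)) = ⟨m, by omega⟩ := by
  unfold reflect
  split_ifs
  · rfl
  · ext
    simp only [Fin.val_rev]
    omega

lemma ract_apply (g : KleinGrp) (f : (Fin n → Fin 2) → Fin 2) (w : Fin n → Fin 2) :
    ract g f w = g.1 (f fun i => g.1⁻¹ (w (reflect g.2 i))) := rfl

instance : SMul KleinGrp ((Fin n → Fin 2) → Fin 2) := ⟨ract⟩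

instance : MulAction KleinGrp ((Fin n → Fin 2) → Fin 2) where
  one_smul _ := rfl
  mul_smul g h f := by
    change ract (g * h) f = ract g (ract h f)
    funext w
    simp only [ract_apply, reflect_mul, Prod.fst_mul, Prod.snd_mul, mul_inv_rev,
      Equiv.Perm.mul_apply]

lemma perm_two_involutive (α : Equiv.Perm (Fin 2)) : Involutive α := by
  intro y
  revert α y
  decide

lemma perm_two_apply_ne_self {α : Equiv.Perm (Fin 2)} (hα : α ≠ 1) (y : Fin 2) : α y ≠ y := by
  revert α y
  decide

def onWords (g : KleinGrp) (w : Fin n → Fin 2) : Fin n → Fin 2 :=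
  fun i => g.1⁻¹ (w (reflect g.2 i))

lemma onWords_involutive (g : KleinGrp) : Involutive (onWords (n := n) g) :=
  fun w => funext fun i => by
    simp only [onWords, reflect_reflect]
    exact perm_two_involutive _ _

lemma smul_eq_self_iff (g : KleinGrp) (f : (Fin n → Fin 2) → Fin 2) :
    g • f = f ↔ ∀ w, f (onWords g w) = g.1⁻¹ (f w) := by
  simp only [funext_iff, Equiv.Perm.eq_inv_iff_eq]
  rfl

lemma card_fixedBy (g : KleinGrp) :
    Nat.card (MulAction.fixedBy ((Fin n → Fin 2) → Fin 2) g) =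
      Nat.card {y // g.1⁻¹ y = y} ^ Nat.card {w // onWords (n := n) g w = w} *
        2 ^ ((2 ^ n - Nat.card {w // onWords (n := n) g w = w}) / 2) := by
  rw [Nat.card_congr (Equiv.subtypeEquivRight fun f =>
      MulAction.mem_fixedBy.trans (smul_eq_self_iff g f)),
    card_equivariant (onWords_involutive g) (perm_two_involutive _)]
  simp

lemma card_fixedBy_of_fst_ne_one (m : ℕ) {g : KleinGrp} (hg : g.1 ≠ 1) :
    Nat.card (MulAction.fixedBy ((Fin (2 * m + 1) → Fin 2) → Fin 2) g) = 2 ^ 2 ^ (2 * m) := by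
  have : IsEmpty {y // g.1⁻¹ y = y} :=
    ⟨fun y => perm_two_apply_ne_self (inv_ne_one.2 hg) y y.2⟩
  have : IsEmpty {w : Fin (2 * m + 1) → Fin 2 // onWords g w = w} := ⟨fun w => by
    have hmid := congrFun w.2 ⟨m, by omega⟩
    rw [onWords, reflect_middle] at hmid
    exact perm_two_apply_ne_self (inv_ne_one.2 hg) _ hmid⟩
  rw [card_fixedBy, Nat.card_of_isEmpty, Nat.card_of_isEmpty, pow_zero, one_mul, Nat.sub_zero,
    pow_succ, Nat.mul_div_cancel _ two_pos]

lemma card_fixedBy_reflection (m : ℕ) :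
    Nat.card (MulAction.fixedBy ((Fin (2 * m + 1) → Fin 2) → Fin 2)
      ((1, Multiplicative.ofAdd 1) : KleinGrp)) = 2 ^ (2 ^ m * (2 ^ m + 1)) := by
  have hpalindromes :
      Nat.card {w : Fin (2 * m + 1) → Fin 2 // onWords (1, Multiplicative.ofAdd 1) w = w} =
        2 ^ (m + 1) := by
    refine (Nat.card_congr (Equiv.subtypeEquivRight fun w => ?_)).trans
      ((card_palindromes (Fin 2) m).trans (by simp))
    simp [funext_iff, onWords, reflect]
  have hletters :
      Nat.card {y : Fin 2 // ((1, Multiplicative.ofAdd 1) : KleinGrp).1⁻¹ y = y} = 2 := by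
    simp
  rw [card_fixedBy, hpalindromes, hletters, ← pow_add]
  congr 1
  obtain ⟨a, ha⟩ : ∃ a, 2 ^ m = a + 1 := Nat.exists_eq_add_one.2 (by positivity)
  rw [pow_succ, pow_succ, pow_mul', ha]
  ring_nf
  omega

end KleinGrp

open KleinGrp MulAction in
theorem count_orbits_two_states_odd (m : ℕ) :
    Nat.card {s : Set ((Fin (2 * m + 1) → Fin 2) → Fin 2) //
        ∃ f, s = {g | ∃ α : KleinGrp, g = ract α f}} =
      (2 * 2 ^ 2 ^ (2 * m) + 2 ^ (2 ^ m * (2 ^ m + 1)) + 2 ^ 2 ^ (2 * m + 1)) / 4 := by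
  have horbit (f : (Fin (2 * m + 1) → Fin 2) → Fin 2) :
      {g | ∃ α : KleinGrp, g = ract α f} = orbit KleinGrp f :=
    Set.ext fun _ => exists_congr fun _ => by rw [eq_comm]; rfl
  have hburnside := card_orbits_mul_card_eq_sum KleinGrp ((Fin (2 * m + 1) → Fin 2) → Fin 2)
  have huniv : (Finset.univ : Finset KleinGrp) = {1, (1, Multiplicative.ofAdd 1),
      (Equiv.swap 0 1, 1), (Equiv.swap 0 1, Multiplicative.ofAdd 1)} := by decide
  rw [huniv, Finset.sum_insert (by decide), Finset.sum_insert (by decide),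
    Finset.sum_insert (by decide), Finset.sum_singleton, fixedBy_one_eq_univ, Nat.card_univ,
    card_fixedBy_reflection, card_fixedBy_of_fst_ne_one m (by decide),
    card_fixedBy_of_fst_ne_one m (by decide), Nat.card_fun, Nat.card_fun, Nat.card_fin,
    Nat.card_fin, show Nat.card KleinGrp = 4 by rw [Nat.card_eq_fintype_card]; decide]
    at hburnside
  simp only [horbit, card_orbitSets]
  omega
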